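/- arXiv:1911.03026 — 6 statements merged into one kernel-verified Lean document; each statement's English description precedes it below -/
import Mathlib

section
/- For integers n ≥ k ≥ 2, the minimum size of a k-path vertex cover of the cycle C_n on n vertices equals ⌈n/k⌉. -/
/-!
A `k`-path vertex cover of `C_n` with `s` vertices has `n ≤ k * s`: sending each vertex `a` to
the pair (first cover vertex among `a, a+1, …, a+k-1`, its offset from `a`) is injective, since
the offset recovers `a` modulo `n`. Conversely the multiples `0, k, 2k, …` below `n` form a cover
with `⌈n/k⌉` vertices; a window that contains no multiple below `n` wraps around through `0`.
-/

open Finset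

/-- `I` is a `k`-path vertex cover of the cycle `C_n` on vertices `0, …, n-1`:
`I ⊆ {0,…,n-1}` and every block of `k` cyclically consecutive vertices meets `I`. -/
def CyclePVC (k n : ℕ) (I : Finset ℕ) : Prop :=
  I ⊆ Finset.range n ∧ ∀ a < n, ∃ t < k, (a + t) % n ∈ I

theorem CyclePVC.le_mul_card {k n : ℕ} {I : Finset ℕ} (hI : CyclePVC k n I) : n ≤ k * #I := by
  choose! t ht hmem using hI.2
  have hinj : Set.InjOn (fun a => ((a + t a) % n, t a)) (range n) := by
    intro a ha b hb hab
    obtain ⟨hmod, hoff⟩ := Prod.mk.inj hab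
    have hab' : a + t a ≡ b + t a [MOD n] := by rw [Nat.ModEq, hmod, hoff]
    exact (Nat.ModEq.add_right_cancel' _ hab').eq_of_lt_of_lt (mem_range.mp ha) (mem_range.mp hb)
  calc n = #(range n) := (card_range n).symm
    _ ≤ #(I ×ˢ range k) := card_le_card_of_injOn _
        (fun a ha => mem_product.mpr
          ⟨hmem a (mem_range.mp ha), mem_range.mpr (ht a (mem_range.mp ha))⟩) hinj
    _ = k * #I := by rw [card_product, card_range, mul_comm]

theorem Nat.mul_lt_iff_lt_ceilDiv {k : ℕ} (hk : 0 < k) (i n : ℕ) : i * k < n ↔ i < n ⌈/⌉ k := by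
  rw [← not_le, ← not_le, ceilDiv_le_iff_le_mul hk, mul_comm]

theorem cyclePVC_image_mul {k : ℕ} (hk : 0 < k) (n : ℕ) :
    CyclePVC k n ((range (n ⌈/⌉ k)).image (· * k)) := by
  refine ⟨fun x hx => ?_, fun a ha => ?_⟩
  · obtain ⟨i, hi, rfl⟩ := mem_image.mp hx
    exact mem_range.mpr ((Nat.mul_lt_iff_lt_ceilDiv hk i n).mpr (mem_range.mp hi))
  set q := a ⌈/⌉ k
  have hq : a ≤ q * k := by rw [mul_comm]; exact (ceilDiv_le_iff_le_mul hk).mp le_rfl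
  have hq' : q * k ≤ a + k - 1 := Nat.div_mul_le_self _ _
  by_cases hqn : q * k < n
  · refine ⟨q * k - a, by omega, ?_⟩
    rw [Nat.add_sub_cancel' hq, Nat.mod_eq_of_lt hqn]
    exact mem_image_of_mem _ (mem_range.mpr ((Nat.mul_lt_iff_lt_ceilDiv hk q n).mp hqn))
  · refine ⟨n - a, by omega, ?_⟩
    rw [Nat.add_sub_cancel' ha.le, Nat.mod_self]
    exact mem_image.mpr ⟨0, mem_range.mpr ((Nat.mul_lt_iff_lt_ceilDiv hk 0 n).mp (by omega)),
      zero_mul k⟩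

theorem card_image_mul_range {k : ℕ} (hk : 0 < k) (m : ℕ) :
    #((range m).image (· * k)) = m := by
  rw [card_image_of_injective _ (mul_left_injective₀ hk.ne'), card_range]

theorem psi_cycle_general (k n : ℕ) (hk : 2 ≤ k) :
    IsLeast {s : ℕ | ∃ I : Finset ℕ, CyclePVC k n I ∧ I.card = s} ((n + k - 1) / k) := by
  have hk0 : 0 < k := by omega
  rw [← Nat.ceilDiv_eq_add_pred_div]
  refine ⟨⟨_, cyclePVC_image_mul hk0 n, card_image_mul_range hk0 _⟩, ?_⟩
  rintro s ⟨I, hI, rfl⟩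
  exact (ceilDiv_le_iff_le_mul hk0).mpr hI.le_mul_card

/-- For `n ≥ k ≥ 2`, the minimum size of a `k`-path vertex cover of `C_n` is `⌈n/k⌉`. -/
theorem psi_cycle (k n : ℕ) (hk : 2 ≤ k) (hn : k ≤ n) :
    IsLeast {s : ℕ | ∃ I : Finset ℕ, CyclePVC k n I ∧ I.card = s} ((n + k - 1) / k) :=
  psi_cycle_general k n hk
end

section
/- Let P = v_1 ... v_n be a path, and let I and J be two k-path vertex covers of P with |I| = |J| = s. Write I = {v_{i_1}, ..., v_{i_s}} and J = {v_{j_1}, ..., v_{j_s}} with i_1 < ... < i_s and j_1 < ... < j_s. Then there exists a TS-sequence between I and J, and the minimum length of a TS-sequence between I and J is exactly Σ_{p=1}^{s} |i_p − j_p|. -/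
/-!
Measure the distance between equal-size covers `I`, `J` by `Σ_p |i_p - j_p|`, the
coordinatewise distance of their sorted lists. A slide changes one sorted coordinate by one
(the order is preserved because the target vertex is free), so every slide changes the distance
by at most one, which bounds the length of any TS-sequence from below.

Conversely, if `I ≠ J`, look at the first index `p` with `i_p ≠ j_p`, say `i_p < j_p`, and at the
maximal run `i_p, i_p + 1, …, x` of consecutive vertices of `I`. Sliding `x` to `x + 1` lowers the
distance by one and keeps a `k`-path vertex cover: the only window that can lose its vertex is the
one ending at `x`, which contains `x - 1 ∈ I` if the run is longer than one vertex (here `k ≥ 2`),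
and otherwise a vertex `j_r = i_r` with `r < p`. Induction on the distance, sliding in `I` or in
`J`, then yields a TS-sequence of exactly that length.
-/

/-- `I` is a `k`-path vertex cover of the path `P_n` on vertices `1, …, n`. -/
def PathPVC (k n : ℕ) (I : Finset ℕ) : Prop :=
  I ⊆ Finset.Icc 1 n ∧ ∀ a : ℕ, 1 ≤ a → a + k ≤ n + 1 → ∃ j ∈ I, a ≤ j ∧ j < a + k

/-- A token-sliding sequence of length `ℓ` between `k`-path vertex covers `I` and `J`
of the path `P_n`. -/
def PathTSSeq (k n : ℕ) (f : ℕ → Finset ℕ) (ℓ : ℕ) (I J : Finset ℕ) : Prop :=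
  f 0 = I ∧ f ℓ = J ∧ (∀ i ≤ ℓ, PathPVC k n (f i)) ∧
    ∀ i < ℓ, ∃ x y : ℕ, f i \ f (i + 1) = {x} ∧ f (i + 1) \ f i = {y} ∧
      (y = x + 1 ∨ x = y + 1)

namespace List

def zipDist (A B : List ℕ) : ℕ := (zipWith Nat.dist A B).sum

@[simp]
theorem zipDist_nil_right (A : List ℕ) : zipDist A [] = 0 := by cases A <;> rfl

@[simp]
theorem zipDist_cons_cons (a b : ℕ) (A B : List ℕ) :
    zipDist (a :: A) (b :: B) = Nat.dist a b + zipDist A B := rfl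

theorem zipDist_comm (A B : List ℕ) : zipDist A B = zipDist B A := by
  simp only [zipDist, zipWith_comm (as := A), Nat.dist_comm]

@[simp]
theorem zipDist_self (A : List ℕ) : zipDist A A = 0 := by
  simp [zipDist, zipWith_self]

theorem eq_of_zipDist_eq_zero {A B : List ℕ} (hlen : A.length = B.length)
    (h : zipDist A B = 0) : A = B := by
  induction A generalizing B with
  | nil => exact (length_eq_zero_iff.mp hlen.symm).symm
  | cons a A ih =>
    cases B with
    | nil => simp at hlen
    | cons b B =>
      rw [zipDist_cons_cons, Nat.add_eq_zero_iff] at h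
      rw [Nat.eq_of_dist_eq_zero h.1, ih (by simpa using hlen) h.2]

theorem zipDist_set_add {A B : List ℕ} {q : ℕ} (v : ℕ) (hqA : q < A.length)
    (hqB : q < B.length) :
    zipDist (A.set q v) B + Nat.dist (A.getD q 0) (B.getD q 0) =
      zipDist A B + Nat.dist v (B.getD q 0) := by
  induction A generalizing q B with
  | nil => simp at hqA
  | cons a A ih =>
    cases B with
    | nil => simp at hqB
    | cons b B =>
      cases q with
      | zero => simp only [set_cons_zero, zipDist_cons_cons, getD_cons_zero]; omega
      | succ q =>
        simp only [set_cons_succ, zipDist_cons_cons, getD_cons_succ]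
        have := ih (q := q) (B := B) (by simpa using hqA) (by simpa using hqB)
        omega

theorem dist_zipDist_set_le (A B : List ℕ) (q v : ℕ) :
    Nat.dist (zipDist (A.set q v) B) (zipDist A B) ≤ Nat.dist (A.getD q 0) v := by
  induction A generalizing q B with
  | nil => simp
  | cons a A ih =>
    cases B with
    | nil => simp
    | cons b B =>
      cases q with
      | zero =>
        simp only [set_cons_zero, zipDist_cons_cons, getD_cons_zero, Nat.dist_add_add_right]
        unfold Nat.dist
        omega
      | succ q =>
        simpa only [set_cons_succ, zipDist_cons_cons, getD_cons_succ, Nat.dist_add_add_left]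
          using ih B q

theorem exists_getD_eq_of_mem {α : Type*} {A : List α} {a d : α} (h : a ∈ A) :
    ∃ r < A.length, A.getD r d = a := by
  obtain ⟨r, hr, rfl⟩ := mem_iff_getElem.mp h
  exact ⟨r, hr, getD_eq_getElem _ _ hr⟩

theorem getD_mem {α : Type*} {A : List α} {r : ℕ} (d : α) (hr : r < A.length) :
    A.getD r d ∈ A := by
  rw [getD_eq_getElem _ _ hr]
  exact getElem_mem hr

theorem exists_first_getD_ne {α : Type*} {A B : List α} (d : α) (hlen : A.length = B.length)
    (hne : A ≠ B) :
    ∃ p < A.length, A.getD p d ≠ B.getD p d ∧ ∀ r < p, A.getD r d = B.getD r d := by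
  classical
  have hex : ∃ p, A.getD p d ≠ B.getD p d := by
    by_contra! h
    refine hne (ext_getElem hlen fun i h₁ h₂ => ?_)
    simpa [getD_eq_getElem, h₁, h₂] using h i
  refine ⟨Nat.find hex, ?_, Nat.find_spec hex, fun r hr => not_not.mp (Nat.find_min hex hr)⟩
  by_contra! hge
  exact Nat.find_spec hex (by rw [getD_eq_default _ _ hge, getD_eq_default _ _ (hlen ▸ hge)])

namespace SortedLT

variable {A : List ℕ} (hA : A.SortedLT)
include hA

theorem getD_lt_getD_iff {r t : ℕ} (hr : r < A.length) (ht : t < A.length) :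
    A.getD r 0 < A.getD t 0 ↔ r < t := by
  rw [getD_eq_getElem _ _ hr, getD_eq_getElem _ _ ht]
  exact hA.strictMono_get.lt_iff_lt (a := ⟨r, hr⟩) (b := ⟨t, ht⟩)

theorem getD_add_sub_le {r t : ℕ} (hrt : r ≤ t) (ht : t < A.length) :
    A.getD r 0 + (t - r) ≤ A.getD t 0 := by
  induction t, hrt using Nat.le_induction with
  | base => simp
  | succ t hrt ih =>
    have := (hA.getD_lt_getD_iff (by omega) ht).mpr (Nat.lt_succ_self t)
    have := ih (by omega)
    omega

theorem exists_run_end {p : ℕ} (hp : p < A.length) :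
    ∃ q, p ≤ q ∧ q < A.length ∧ A.getD q 0 = A.getD p 0 + (q - p) ∧ A.getD q 0 + 1 ∉ A := by
  by_cases hnext : A.getD p 0 + 1 ∈ A
  · obtain ⟨r, hr, hrp⟩ := exists_getD_eq_of_mem (d := 0) hnext
    have hpr : p < r := (hA.getD_lt_getD_iff hp hr).mp (by omega)
    have hr_eq : r = p + 1 := by
      by_contra hne
      have h₁ := (hA.getD_lt_getD_iff hp (by omega : p + 1 < A.length)).mpr (by omega)
      have h₂ := (hA.getD_lt_getD_iff (by omega : p + 1 < A.length) hr).mpr (by omega)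
      omega
    subst hr_eq
    obtain ⟨q, hpq, hq, hrun, hend⟩ := exists_run_end hr
    exact ⟨q, by omega, hq, by omega, hend⟩
  · exact ⟨p, le_rfl, hp, by simp, hnext⟩
termination_by A.length - p

end SortedLT

end List

namespace Finset

theorem eq_insert_erase_of_sdiff_eq_singleton {α : Type*} [DecidableEq α] {S S' : Finset α}
    {x y : α} (h₁ : S \ S' = {x}) (h₂ : S' \ S = {y}) : S' = insert y (S.erase x) := by
  ext t
  simp only [Finset.ext_iff, mem_sdiff, mem_singleton] at h₁ h₂
  simp only [mem_insert, mem_erase]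
  grind

def slideRight (S : Finset ℕ) (x : ℕ) : Finset ℕ := insert (x + 1) (S.erase x)

theorem sort_slideRight {S : Finset ℕ} {x q : ℕ} (hx1 : x + 1 ∉ S) (hq : q < (S.sort).length)
    (hqx : (S.sort).getD q 0 = x) : (S.slideRight x).sort = (S.sort).set q (x + 1) := by
  set A := S.sort
  have hA : A.SortedLT := sortedLT_sort S
  have hsorted : (A.set q (x + 1)).Pairwise (· < ·) := by
    rw [List.pairwise_iff_getElem]
    intro i j hi hj hij
    simp only [List.length_set] at hi hj
    have hAij := (hA.getD_lt_getD_iff hi hj).mpr hij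
    have hAqj := hA.getD_lt_getD_iff hq hj
    have hAiq := hA.getD_lt_getD_iff hi hq
    have hAj : A.getD j 0 ≠ x + 1 := fun h => hx1 ((mem_sort _).mp (h ▸ List.getD_mem 0 hj))
    simp only [List.getElem_set]
    split_ifs <;> (try simp only [← List.getD_eq_getElem _ 0]) <;> omega
  have hperm : (x :: A.set q (x + 1)).Perm ((x + 1) :: A) := by
    have h := List.getD_set_perm_cons A q (x + 1)
    rwa [List.getElem?_eq_getElem hq, Option.getD_some, ← List.getD_eq_getElem _ 0 hq, hqx] at h
  have hval : ((A.set q (x + 1) : List ℕ) : Multiset ℕ) = (S.slideRight x).val := by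
    have h := Multiset.coe_eq_coe.mpr hperm
    rw [← Multiset.cons_coe, ← Multiset.cons_coe, sort_eq] at h
    rw [slideRight, insert_val_of_notMem (fun h => hx1 (mem_of_mem_erase h)), erase_val,
      ← Multiset.erase_cons_tail _ (by omega : x + 1 ≠ x), ← h, Multiset.erase_cons_head]
  refine List.Perm.eq_of_pairwise' (pairwise_sort _ _) (hsorted.imp le_of_lt) ?_
  rw [← Multiset.coe_eq_coe, sort_eq, hval]

theorem sort_injective {α : Type*} [LinearOrder α] :
    Function.Injective (fun S : Finset α => S.sort) := fun S T h => by
  simpa only [sort_toFinset] using congrArg List.toFinset h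

def sortDist (I J : Finset ℕ) : ℕ := (I.sort).zipDist (J.sort)

theorem sortDist_comm (I J : Finset ℕ) : sortDist I J = sortDist J I := List.zipDist_comm _ _

@[simp]
theorem sortDist_self (I : Finset ℕ) : sortDist I I = 0 := List.zipDist_self _

theorem eq_of_sortDist_eq_zero {I J : Finset ℕ} (hcard : I.card = J.card)
    (h : sortDist I J = 0) : I = J :=
  sort_injective (List.eq_of_zipDist_eq_zero (by simp [hcard]) h)

theorem dist_sortDist_slideRight_le {S : Finset ℕ} {x : ℕ} (hx : x ∈ S) (hx1 : x + 1 ∉ S)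
    (J : Finset ℕ) : Nat.dist (sortDist (S.slideRight x) J) (sortDist S J) ≤ 1 := by
  obtain ⟨q, hq, hqx⟩ := List.exists_getD_eq_of_mem (A := S.sort) (d := 0) ((mem_sort _).mpr hx)
  have h := List.dist_zipDist_set_le (S.sort) (J.sort) q (x + 1)
  rw [hqx, Nat.dist_eq_sub_of_le (Nat.le_add_right x 1), Nat.add_sub_cancel_left] at h
  rwa [sortDist, sortDist, sort_slideRight hx1 hq hqx]

theorem sortDist_slideRight_add_one {S J : Finset ℕ} {x q : ℕ} (hx1 : x + 1 ∉ S)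
    (hq : q < (S.sort).length) (hqx : (S.sort).getD q 0 = x) (hqJ : q < (J.sort).length)
    (hlt : x < (J.sort).getD q 0) : sortDist (S.slideRight x) J + 1 = sortDist S J := by
  have h := List.zipDist_set_add (x + 1) hq hqJ
  rw [hqx, Nat.dist_eq_sub_of_le hlt.le, Nat.dist_eq_sub_of_le hlt] at h
  rw [sortDist, sortDist, sort_slideRight hx1 hq hqx]
  omega

end Finset

open Finset

def IsSlide (S S' : Finset ℕ) : Prop :=
  ∃ x y : ℕ, S \ S' = {x} ∧ S' \ S = {y} ∧ (y = x + 1 ∨ x = y + 1)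

theorem IsSlide.symm {S S' : Finset ℕ} (h : IsSlide S S') : IsSlide S' S := by
  obtain ⟨x, y, h₁, h₂, hxy⟩ := h
  exact ⟨y, x, h₂, h₁, hxy.symm⟩

theorem isSlide_slideRight {S : Finset ℕ} {x : ℕ} (hx : x ∈ S) (hx1 : x + 1 ∉ S) :
    IsSlide S (S.slideRight x) := by
  refine ⟨x, x + 1, ?_, ?_, Or.inl rfl⟩ <;> ext t <;>
    simp only [slideRight, mem_sdiff, mem_insert, mem_erase, mem_singleton] <;> grind

theorem IsSlide.eq_slideRight {S S' : Finset ℕ} (h : IsSlide S S') :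
    (∃ x ∈ S, x + 1 ∉ S ∧ S' = S.slideRight x) ∨ (∃ x ∈ S', x + 1 ∉ S' ∧ S = S'.slideRight x) := by
  obtain ⟨x, y, h₁, h₂, hxy⟩ := h
  have hx : x ∈ S \ S' := h₁ ▸ mem_singleton_self x
  have hy : y ∈ S' \ S := h₂ ▸ mem_singleton_self y
  rw [mem_sdiff] at hx hy
  rcases hxy with rfl | rfl
  · exact Or.inl ⟨x, hx.1, hy.2, eq_insert_erase_of_sdiff_eq_singleton h₁ h₂⟩
  · exact Or.inr ⟨y, hy.1, hx.2, eq_insert_erase_of_sdiff_eq_singleton h₂ h₁⟩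

theorem IsSlide.card_eq {S S' : Finset ℕ} (h : IsSlide S S') : S'.card = S.card := by
  obtain ⟨x, y, h₁, h₂, -⟩ := h
  have hS := card_sdiff_add_card_inter S S'
  have hS' := card_sdiff_add_card_inter S' S
  rw [h₁, card_singleton] at hS
  rw [h₂, card_singleton, inter_comm] at hS'
  omega

theorem IsSlide.sortDist_le {S S' : Finset ℕ} (h : IsSlide S S') (J : Finset ℕ) :
    sortDist S J ≤ sortDist S' J + 1 := by
  rcases h.eq_slideRight with ⟨x, hx, hx1, rfl⟩ | ⟨x, hx, hx1, rfl⟩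
  · have := dist_sortDist_slideRight_le hx hx1 J
    have := Nat.dist_tri_right (sortDist (S.slideRight x) J) (sortDist S J)
    omega
  · have := dist_sortDist_slideRight_le hx hx1 J
    have := Nat.dist_tri_right' (sortDist (S'.slideRight x) J) (sortDist S' J)
    omega

theorem PathPVC.slideRight {k n x : ℕ} {I : Finset ℕ} (hI : PathPVC k n I) (hxn : x + 1 ≤ n)
    (hwin : ∀ a, 1 ≤ a → a + k = x + 1 → ∃ y ∈ I.erase x, a ≤ y ∧ y < a + k) :
    PathPVC k n (I.slideRight x) := by
  refine ⟨fun t ht => ?_, fun a ha hak => ?_⟩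
  · rcases mem_insert.mp ht with rfl | ht
    · exact mem_Icc.mpr ⟨by omega, hxn⟩
    · exact hI.1 (mem_of_mem_erase ht)
  · obtain ⟨j, hj, haj, hjk⟩ := hI.2 a ha hak
    by_cases hjx : j = x
    · subst hjx
      by_cases hlt : j + 1 < a + k
      · exact ⟨j + 1, mem_insert_self _ _, by omega, hlt⟩
      · obtain ⟨y, hy, hay, hyk⟩ := hwin a ha (by omega)
        exact ⟨y, mem_insert_of_mem hy, hay, hyk⟩
    · exact ⟨j, mem_insert_of_mem (mem_erase.mpr ⟨hjx, hj⟩), haj, hjk⟩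

theorem PathPVC.slideRight_of_pred_mem {k n x : ℕ} {I : Finset ℕ} (hk : 2 ≤ k)
    (hI : PathPVC k n I) (hxn : x + 1 ≤ n) (hpred : x - 1 ∈ I) :
    PathPVC k n (I.slideRight x) := by
  have := mem_Icc.mp (hI.1 hpred)
  exact hI.slideRight hxn fun a _ _ => ⟨x - 1, mem_erase.mpr ⟨by omega, hpred⟩, by omega, by omega⟩

theorem PathPVC.slideRight_of_forall_le {k n x : ℕ} {I J : Finset ℕ} (hI : PathPVC k n I)
    (hJ : PathPVC k n J) (hxn : x + 1 ≤ n) (hle : ∀ j ∈ J, j ≤ x → j ∈ I.erase x) :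
    PathPVC k n (I.slideRight x) :=
  hI.slideRight hxn fun a ha hax => by
    obtain ⟨j, hj, haj, hjk⟩ := hJ.2 a ha (by omega)
    exact ⟨j, hle j hj (by omega), haj, hjk⟩

theorem PathPVC.exists_slideRight_of_getD_lt {k n p : ℕ} {I J : Finset ℕ} (hk : 2 ≤ k)
    (hI : PathPVC k n I) (hJ : PathPVC k n J) (hcard : I.card = J.card) (hp : p < I.card)
    (hagree : ∀ r < p, (I.sort).getD r 0 = (J.sort).getD r 0)
    (hlt : (I.sort).getD p 0 < (J.sort).getD p 0) :
    ∃ x ∈ I, x + 1 ∉ I ∧ PathPVC k n (I.slideRight x) ∧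
      sortDist (I.slideRight x) J + 1 = sortDist I J := by
  set A := I.sort
  set B := J.sort
  have hA : A.SortedLT := sortedLT_sort I
  have hB : B.SortedLT := sortedLT_sort J
  have hlenA : A.length = I.card := length_sort _
  have hlenB : B.length = J.card := length_sort _
  have memA {r : ℕ} (hr : r < I.card) : A.getD r 0 ∈ I :=
    (mem_sort _).mp (List.getD_mem (A := A) 0 (by omega))
  obtain ⟨q, hpq, hq, hrun, hend⟩ := hA.exists_run_end (by omega : p < A.length)
  set x := A.getD q 0
  have hxB : x < B.getD q 0 := by
    have := hB.getD_add_sub_le hpq (by omega)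
    omega
  have hxn : x + 1 ≤ n := by
    have := hJ.1 ((mem_sort _).mp (List.getD_mem (A := B) 0 (by omega : q < B.length)))
    rw [mem_Icc] at this
    omega
  have hx1 : x + 1 ∉ I := fun h => hend ((mem_sort _).mpr h)
  refine ⟨x, memA (by omega), hx1, ?_, ?_⟩
  · rcases hpq.eq_or_lt with rfl | hpq
    · refine hI.slideRight_of_forall_le hJ hxn fun j hj hjx => ?_
      obtain ⟨r, hr, rfl⟩ := List.exists_getD_eq_of_mem (A := B) (d := 0) ((mem_sort _).mpr hj)
      have hrp : r < p := (hB.getD_lt_getD_iff hr (by omega)).mp (by omega)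
      rw [← hagree r hrp]
      exact mem_erase.mpr ⟨((hA.getD_lt_getD_iff (by omega) hq).mpr hrp).ne, memA (by omega)⟩
    · have h₁ := hA.getD_add_sub_le (by omega : p ≤ q - 1) (by omega : q - 1 < A.length)
      have h₂ := (hA.getD_lt_getD_iff (by omega : q - 1 < A.length) hq).mpr (by omega)
      have hpred : A.getD (q - 1) 0 = x - 1 := by omega
      exact hI.slideRight_of_pred_mem hk hxn (hpred ▸ memA (by omega))
  · exact sortDist_slideRight_add_one hx1 hq rfl (by omega : q < B.length) hxB

theorem PathPVC.exists_slide_of_sortDist_ne_zero {k n : ℕ} {I J : Finset ℕ} (hk : 2 ≤ k)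
    (hI : PathPVC k n I) (hJ : PathPVC k n J) (hcard : I.card = J.card)
    (hdist : sortDist I J ≠ 0) :
    (∃ I', PathPVC k n I' ∧ IsSlide I I' ∧ sortDist I' J + 1 = sortDist I J) ∨
      (∃ J', PathPVC k n J' ∧ IsSlide J J' ∧ sortDist I J' + 1 = sortDist I J) := by
  have hne : I.sort ≠ J.sort := fun h => hdist (by rw [sortDist, h, List.zipDist_self])
  obtain ⟨p, hp, hdiff, hagree⟩ := List.exists_first_getD_ne 0 (by simp [hcard]) hne
  rw [length_sort] at hp
  rcases hdiff.lt_or_gt with hlt | hgt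
  · obtain ⟨x, hx, hx1, hcov, hdec⟩ := hI.exists_slideRight_of_getD_lt hk hJ hcard hp hagree hlt
    exact Or.inl ⟨_, hcov, isSlide_slideRight hx hx1, hdec⟩
  · obtain ⟨x, hx, hx1, hcov, hdec⟩ := hJ.exists_slideRight_of_getD_lt hk hI hcard.symm
      (hcard ▸ hp) (fun r hr => (hagree r hr).symm) hgt
    rw [sortDist_comm (J.slideRight x), sortDist_comm J] at hdec
    exact Or.inr ⟨_, hcov, isSlide_slideRight hx hx1, hdec⟩

namespace PathTSSeq

variable {k n ℓ : ℕ} {f : ℕ → Finset ℕ} {I J : Finset ℕ}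

theorem refl (hI : PathPVC k n I) : PathTSSeq k n (fun _ => I) 0 I I :=
  ⟨rfl, rfl, fun _ _ => hI, fun _ h => absurd h (Nat.not_lt_zero _)⟩

theorem cons {S : Finset ℕ} (hS : PathPVC k n S) (hslide : IsSlide S I)
    (hf : PathTSSeq k n f ℓ I J) :
    PathTSSeq k n (fun | 0 => S | i + 1 => f i) (ℓ + 1) S J := by
  obtain ⟨rfl, hℓ, hcov, hmove⟩ := hf
  refine ⟨rfl, hℓ, fun i hi => ?_, fun i hi => ?_⟩
  · rcases i with _ | i
    · exact hS
    · exact hcov i (by omega)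
  · rcases i with _ | i
    · exact hslide
    · exact hmove i (by omega)

theorem symm (hf : PathTSSeq k n f ℓ I J) : PathTSSeq k n (fun i => f (ℓ - i)) ℓ J I := by
  obtain ⟨h0, hℓ, hcov, hmove⟩ := hf
  refine ⟨by simpa using hℓ, by simpa using h0, fun i _ => hcov _ (by omega), fun i hi => ?_⟩
  have hi' : ℓ - i = ℓ - (i + 1) + 1 := by omega
  simp only [hi']
  exact IsSlide.symm (hmove _ (by omega))

theorem sortDist_le (hf : PathTSSeq k n f ℓ I J) : sortDist I J ≤ ℓ := by
  obtain ⟨h0, hℓ, -, hmove⟩ := hf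
  have key : ∀ i ≤ ℓ, sortDist I J ≤ sortDist (f i) J + i := by
    intro i hi
    induction i with
    | zero => simp [h0]
    | succ i ih =>
      have := IsSlide.sortDist_le (hmove i (by omega)) J
      have := ih (by omega)
      omega
  simpa [hℓ] using key ℓ le_rfl

end PathTSSeq

theorem PathPVC.exists_pathTSSeq {k n : ℕ} {I J : Finset ℕ} (hk : 2 ≤ k) (hI : PathPVC k n I)
    (hJ : PathPVC k n J) (hcard : I.card = J.card) : ∃ f, PathTSSeq k n f (sortDist I J) I J := by
  induction hm : sortDist I J generalizing I J with
  | zero =>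
    obtain rfl := eq_of_sortDist_eq_zero hcard hm
    exact ⟨_, PathTSSeq.refl hI⟩
  | succ m ih =>
    rcases hI.exists_slide_of_sortDist_ne_zero hk hJ hcard (by omega) with
      ⟨I', hI', hslide, hdec⟩ | ⟨J', hJ', hslide, hdec⟩
    · obtain ⟨f, hf⟩ := ih hI' hJ (hslide.card_eq.trans hcard) (by omega)
      exact ⟨_, hf.cons hI hslide⟩
    · obtain ⟨f, hf⟩ := ih hJ' hI (hslide.card_eq.trans hcard.symm) (by rw [sortDist_comm]; omega)
      exact ⟨_, (hf.cons hJ hslide).symm⟩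

theorem path_ts_shortest_general (k n s : ℕ) (hk : 2 ≤ k) (I J : Finset ℕ)
    (hI : PathPVC k n I) (hJ : PathPVC k n J) (hIs : I.card = s) (hJs : J.card = s) :
    IsLeast {ℓ : ℕ | ∃ f : ℕ → Finset ℕ, PathTSSeq k n f ℓ I J}
      ((List.zipWith (fun a b => max a b - min a b)
        (I.sort (· ≤ ·)) (J.sort (· ≤ ·))).sum) := by
  have hdist : (List.zipWith (fun a b => max a b - min a b)
      (I.sort (· ≤ ·)) (J.sort (· ≤ ·))).sum = sortDist I J := by
    simp only [← Nat.dist_eq_max_sub_min]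
    rfl
  rw [hdist]
  exact ⟨hI.exists_pathTSSeq hk hJ (hIs.trans hJs.symm), fun ℓ ⟨f, hf⟩ => hf.sortDist_le⟩

/-- On a path, two equal-size `k`-path vertex covers `I = {v_{i_1} < … < v_{i_s}}` and
`J = {v_{j_1} < … < v_{j_s}}` are always reconfigurable under token sliding, and the
minimum length of a TS-sequence is exactly `Σ_p |i_p − j_p|`. -/
theorem path_ts_shortest (k n s : ℕ) (hk : 2 ≤ k) (hn : k ≤ n) (I J : Finset ℕ)
    (hI : PathPVC k n I) (hJ : PathPVC k n J) (hIs : I.card = s) (hJs : J.card = s) :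
    IsLeast {ℓ : ℕ | ∃ f : ℕ → Finset ℕ, PathTSSeq k n f ℓ I J}
      ((List.zipWith (fun a b => max a b - min a b)
        (I.sort (· ≤ ·)) (J.sort (· ≤ ·))).sum) :=
  path_ts_shortest_general k n s hk I J hI hJ hIs hJs
end

section
/- Let T be a tree rooted at r with ψ_k(T) ≥ 1, and let T_v be a properly rooted subtree of T (T_v contains a k-vertex path, but T_v − v does not). Then every k-path vertex cover of T contains at least one vertex of T_v, and consequently ψ_k(T − T_v) = ψ_k(T) − 1, where T − T_v is the forest obtained by deleting all vertices of T_v. -/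
/-!
A path of `T` that avoids `v` lies either inside `T_v − v` or outside `T_v`, because the path
from `r` to any vertex of `T_v` passes through `v`. Since `T_v − v` has no `k`-path, a cover of
`T − T_v` together with `v` covers `T`, so `ψ_k(T) ≤ ψ_k(T − T_v) + 1`. Conversely every cover
of `T` meets `T_v`, which contains a `k`-path, so its trace on `T − T_v` is a cover with at least
one vertex less.
-/

/-- `I` is a `k`-path vertex cover of `G`. -/
def IsKPVC {W : Type*} (G : SimpleGraph W) (k : ℕ) (I : Set W) : Prop :=
  ∀ ⦃u v : W⦄ (p : G.Walk u v), p.IsPath → p.length + 1 = k → ∃ x ∈ p.support, x ∈ I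

/-- `G` contains a path on `k` vertices. -/
def HasKPath {W : Type*} (G : SimpleGraph W) (k : ℕ) : Prop :=
  ∃ (u w : W) (p : G.Walk u w), p.IsPath ∧ p.length + 1 = k

/-- The minimum size of a `k`-path vertex cover of `G`. -/
noncomputable def psi {W : Type*} (G : SimpleGraph W) (k : ℕ) : ℕ :=
  sInf {s : ℕ | ∃ I : Set W, IsKPVC G k I ∧ I.ncard = s}

/-- The set of vertices of the subtree `T_v` of the tree `T` rooted at `r`:
`u` is in `T_v` iff `v` lies on the (unique) path from `r` to `u`. -/
def Desc {V : Type*} (T : SimpleGraph V) (r v : V) : Set V :=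
  {u | ∀ p : T.Walk r u, p.IsPath → v ∈ p.support}

/-- `T_v` is properly rooted: `T_v` contains a `k`-vertex path but `T_v − v` does not. -/
def ProperlyRooted {V : Type*} (T : SimpleGraph V) (k : ℕ) (r v : V) : Prop :=
  HasKPath (T.induce (Desc T r v)) k ∧ ¬ HasKPath (T.induce (Desc T r v \ {v})) k

open SimpleGraph

section KPathCover

variable {V W : Type*} {G : SimpleGraph V} {H : SimpleGraph W} {k : ℕ}

lemma IsKPVC.comap {I : Set V} (hI : IsKPVC G k I) (f : H →g G) (hf : Function.Injective f) :
    IsKPVC H k (f ⁻¹' I) := by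
  intro u w p hp hlen
  obtain ⟨x, hx, hxI⟩ := hI (p.map f) (hp.map hf) (by rwa [Walk.length_map])
  rw [Walk.support_map, List.mem_map] at hx
  obtain ⟨y, hy, rfl⟩ := hx
  exact ⟨y, hy, hxI⟩

lemma IsKPVC.nonempty {I : Set V} (hI : IsKPVC G k I) (h : HasKPath G k) : I.Nonempty := by
  obtain ⟨u, w, p, hp, hlen⟩ := h
  obtain ⟨x, -, hx⟩ := hI p hp hlen
  exact ⟨x, hx⟩

lemma IsKPVC.inter_nonempty_of_hasKPath_induce {I A : Set V} (hI : IsKPVC G k I)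
    (h : HasKPath (G.induce A) k) : (I ∩ A).Nonempty := by
  obtain ⟨x, hx⟩ := (hI.comap (Embedding.induce A).toHom Subtype.val_injective).nonempty h
  exact ⟨x, hx, x.2⟩

variable {A : Set V} {u w : V}

lemma SimpleGraph.Walk.IsPath.induce {p : G.Walk u w} (hp : p.IsPath)
    (hs : ∀ x ∈ p.support, x ∈ A) : (p.induce A hs).IsPath :=
  .of_map (f := (Embedding.induce A).toHom) (by rwa [Walk.map_induce])

lemma SimpleGraph.Walk.length_induce (p : G.Walk u w) (hs : ∀ x ∈ p.support, x ∈ A) :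
    (p.induce A hs).length = p.length := by
  induction p with
  | nil => rfl
  | cons _ _ ih => simp [ih]

lemma hasKPath_induce_of_support_subset (p : G.Walk u w) (hp : p.IsPath)
    (hlen : p.length + 1 = k) (hs : ∀ x ∈ p.support, x ∈ A) : HasKPath (G.induce A) k :=
  ⟨_, _, p.induce A hs, hp.induce hs, by rwa [Walk.length_induce]⟩

lemma IsKPVC.exists_mem_image_val {J : Set A} (hJ : IsKPVC (G.induce A) k J)
    (p : G.Walk u w) (hp : p.IsPath) (hlen : p.length + 1 = k) (hs : ∀ x ∈ p.support, x ∈ A) :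
    ∃ x ∈ p.support, x ∈ Subtype.val '' J := by
  obtain ⟨y, hy, hyJ⟩ := hJ (p.induce A hs) (hp.induce hs) (by rwa [Walk.length_induce])
  refine ⟨y, ?_, y, hyJ, rfl⟩
  rw [Walk.support_induce, List.mem_attachWith] at hy
  exact hy

lemma isKPVC_univ (G : SimpleGraph V) (k : ℕ) : IsKPVC G k Set.univ :=
  fun u _ p _ _ => ⟨u, p.start_mem_support, Set.mem_univ u⟩

lemma psi_le {I : Set V} (hI : IsKPVC G k I) : psi G k ≤ I.ncard :=
  Nat.sInf_le ⟨I, hI, rfl⟩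

lemma exists_isKPVC_ncard_eq_psi (G : SimpleGraph V) (k : ℕ) :
    ∃ I : Set V, IsKPVC G k I ∧ I.ncard = psi G k :=
  Nat.sInf_mem (s := {s | ∃ I : Set V, IsKPVC G k I ∧ I.ncard = s}) ⟨_, _, isKPVC_univ G k, rfl⟩

lemma psi_induce_add_one_le [Finite V] (h : ∀ I, IsKPVC G k I → (I \ A).Nonempty) :
    psi (G.induce A) k + 1 ≤ psi G k := by
  obtain ⟨I, hI, hIcard⟩ := exists_isKPVC_ncard_eq_psi G k
  have htrace : psi (G.induce A) k ≤ (Subtype.val ⁻¹' I : Set A).ncard :=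
    psi_le (hI.comap (Embedding.induce A).toHom Subtype.val_injective)
  have hcard : (Subtype.val ⁻¹' I : Set A).ncard = (I ∩ A).ncard := by
    rw [← Set.ncard_image_of_injective _ Subtype.val_injective, Subtype.image_preimage_coe,
      Set.inter_comm]
  have hsplit := Set.ncard_inter_add_ncard_sdiff_eq_ncard I A (Set.toFinite I)
  have hdiff := (Set.ncard_pos (Set.toFinite _)).mpr (h I hI)
  omega

lemma psi_le_psi_induce_add_one (v : V)
    (h : ∀ ⦃u w : V⦄ (p : G.Walk u w), p.IsPath → p.length + 1 = k → v ∉ p.support →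
      ∀ x ∈ p.support, x ∈ A) :
    psi G k ≤ psi (G.induce A) k + 1 := by
  obtain ⟨J, hJ, hJcard⟩ := exists_isKPVC_ncard_eq_psi (G.induce A) k
  have hcover : IsKPVC G k (insert v (Subtype.val '' J)) := by
    intro u w p hp hlen
    by_cases hv : v ∈ p.support
    · exact ⟨v, hv, Set.mem_insert v _⟩
    · obtain ⟨x, hx, hxJ⟩ := hJ.exists_mem_image_val p hp hlen (h p hp hlen hv)
      exact ⟨x, hx, Set.mem_insert_of_mem v hxJ⟩
  calc psi G k ≤ (insert v (Subtype.val '' J)).ncard := psi_le hcover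
    _ ≤ (Subtype.val '' J).ncard + 1 := Set.ncard_insert_le v _
    _ = psi (G.induce A) k + 1 := by
      rw [Set.ncard_image_of_injective J Subtype.val_injective, hJcard]

end KPathCover

section RootedSubtree

variable {V : Type*} {T : SimpleGraph V} {k : ℕ} {r v u w : V}

/-- A path from `r` to `y` avoiding `v`, continued along `p` to `x`, would reach `x`
avoiding `v`. -/
lemma SimpleGraph.Walk.mem_support_of_mem_desc_of_notMem_desc (p : T.Walk u w) {x y : V}
    (hx : x ∈ p.support) (hy : y ∈ p.support) (hxS : x ∈ Desc T r v) (hyS : y ∉ Desc T r v) :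
    v ∈ p.support := by
  classical
  by_contra hv
  obtain ⟨q, -, hqv⟩ : ∃ q : T.Walk r y, q.IsPath ∧ v ∉ q.support := by simpa [Desc] using hyS
  let q' : T.Walk r x := q.append ((p.takeUntil y hy).reverse.append (p.takeUntil x hx))
  have hq'v : v ∉ q'.support := by
    simp only [q', Walk.mem_support_append_iff, Walk.support_reverse, List.mem_reverse, not_or]
    exact ⟨hqv, fun h => hv (p.support_takeUntil_subset_support hy h),
      fun h => hv (p.support_takeUntil_subset_support hx h)⟩
  exact hq'v (q'.support_bypass_subset_support (hxS q'.bypass q'.bypass_isPath))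

lemma ProperlyRooted.support_subset_compl_desc (hpr : ProperlyRooted T k r v)
    (p : T.Walk u w) (hp : p.IsPath) (hlen : p.length + 1 = k) (hv : v ∉ p.support) :
    ∀ x ∈ p.support, x ∈ (Desc T r v)ᶜ := by
  intro x hx hxS
  refine hpr.2 (hasKPath_induce_of_support_subset p hp hlen fun y hy => ⟨?_, ?_⟩)
  · by_contra hyS
    exact hv (p.mem_support_of_mem_desc_of_notMem_desc hx hy hxS hyS)
  · rintro rfl
    exact hv hy

end RootedSubtree

theorem properly_rooted_subtree_general {V : Type*} [Fintype V] (T : SimpleGraph V)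
    (k : ℕ) (r v : V)
    (hpr : ProperlyRooted T k r v) :
    (∀ I : Set V, IsKPVC T k I → (I ∩ Desc T r v).Nonempty) ∧
    psi (T.induce ((Desc T r v)ᶜ)) k = psi T k - 1 := by
  have hcover : ∀ I : Set V, IsKPVC T k I → (I ∩ Desc T r v).Nonempty :=
    fun I hI => hI.inter_nonempty_of_hasKPath_induce hpr.1
  have hupper := psi_induce_add_one_le (A := (Desc T r v)ᶜ) fun I hI => by
    simpa only [Set.sdiff_compl] using hcover I hI
  have hlower := psi_le_psi_induce_add_one v fun _ _ p => hpr.support_subset_compl_desc p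
  exact ⟨hcover, by omega⟩

/-- If `T_v` is a properly rooted subtree of a tree `T` with `ψ_k(T) ≥ 1`, then every
`k`-path vertex cover of `T` meets `T_v`, and `ψ_k(T − T_v) = ψ_k(T) − 1`. -/
theorem properly_rooted_subtree {V : Type*} [Fintype V] (T : SimpleGraph V)
    (hT : T.IsTree) (k : ℕ) (hk : 2 ≤ k) (r v : V)
    (hpsi : 1 ≤ psi T k) (hpr : ProperlyRooted T k r v) :
    (∀ I : Set V, IsKPVC T k I → (I ∩ Desc T r v).Nonempty) ∧
    psi (T.induce ((Desc T r v)ᶜ)) k = psi T k - 1 :=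
  properly_rooted_subtree_general T k r v hpr
end

section
/- Let G be a graph, and let G' be obtained from G by attaching to each vertex x of G a new pendant path P^x on ⌊(k−1)/2⌋ vertices (joining x to one endpoint of P^x). Then every vertex cover of G is a k-path vertex cover of G'. -/
/-- The graph `G'` obtained from `G` by attaching to each vertex `x` a pendant path
`P^x` on `m` new vertices `(x, 0), …, (x, m-1)`, joined to `G` through `x`. -/
def GPrime {V : Type*} (G : SimpleGraph V) (m : ℕ) : SimpleGraph (V ⊕ V × Fin m) where
  Adj a b :=
    match a, b with
    | Sum.inl u, Sum.inl w => G.Adj u w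
    | Sum.inl u, Sum.inr p => u = p.1 ∧ (p.2 : ℕ) = 0
    | Sum.inr p, Sum.inl u => u = p.1 ∧ (p.2 : ℕ) = 0
    | Sum.inr p, Sum.inr q => p.1 = q.1 ∧ ((p.2 : ℕ) + 1 = q.2 ∨ (q.2 : ℕ) + 1 = p.2)
  symm := by
    constructor
    rintro (u | p) (w | q) h
    · exact G.adj_symm h
    · exact h
    · exact h
    · exact ⟨h.1.symm, h.2.symm⟩
  loopless := by
    constructor
    rintro (u | p) h
    · exact G.irrefl h
    · rcases h with ⟨-, h⟩; omega

/-!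
An edge of `G'` that is not an edge of `G` joins two vertices of the same block `{x} ∪ P^x`.
So a path of `G'` either uses an edge of `G`, and then meets the vertex cover, or stays inside
a single block, which has only `⌊(k−1)/2⌋ + 1 < k` vertices.
-/

namespace GPrime

variable {V : Type*} {G : SimpleGraph V} {m : ℕ}

def proj : V ⊕ V × Fin m → V := Sum.elim id Prod.fst

def pos : V ⊕ V × Fin m → Option (Fin m) := Sum.elim (fun _ => none) (fun q => some q.2)

lemma injOn_pos_proj_eq (x : V) : Set.InjOn (pos (m := m)) {v | proj v = x} := by
  rintro (u | q) hu (w | q') hw h <;> simp_all [pos, proj, Prod.ext_iff]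

lemma proj_eq_of_adj {a b : V ⊕ V × Fin m} (h : (GPrime G m).Adj a b)
    (hab : ¬ (a.isLeft ∧ b.isLeft)) : proj a = proj b := by
  rcases a with u | p <;> rcases b with w | q
  · simp at hab
  · exact h.1
  · exact h.1.symm
  · exact h.1

lemma proj_eq_of_mem_support {a b : V ⊕ V × Fin m} (p : (GPrime G m).Walk a b)
    (hp : ∀ d ∈ p.darts, ¬ (d.fst.isLeft ∧ d.snd.isLeft)) :
    ∀ v ∈ p.support, proj v = proj a := by
  induction p with
  | nil => simp
  | cons h q ih =>
    simp only [SimpleGraph.Walk.darts_cons, List.mem_cons, forall_eq_or_imp] at hp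
    simp only [SimpleGraph.Walk.support_cons, List.mem_cons, forall_eq_or_imp]
    exact ⟨trivial, fun v hv => (ih hp.2 v hv).trans (proj_eq_of_adj h hp.1).symm⟩

lemma length_le_of_isPath_of_proj_eq {a b : V ⊕ V × Fin m} {p : (GPrime G m).Walk a b}
    (hp : p.IsPath) {x : V} (hx : ∀ v ∈ p.support, proj v = x) : p.length ≤ m := by
  have hnodup : (p.support.map pos).Nodup :=
    hp.support_nodup.map_on fun v hv w hw => injOn_pos_proj_eq x (hx v hv) (hx w hw)
  simpa using hnodup.length_le_card

lemma fst_mem_or_snd_mem_of_isLeft {I : Set V} (hI : ∀ ⦃u v : V⦄, G.Adj u v → u ∈ I ∨ v ∈ I)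
    (d : (GPrime G m).Dart) (hd : d.fst.isLeft ∧ d.snd.isLeft) :
    d.fst ∈ Sum.inl '' I ∨ d.snd ∈ Sum.inl '' I := by
  obtain ⟨⟨u | _, w | _⟩, h⟩ := d <;> simp at hd
  exact (hI h).imp (Set.mem_image_of_mem _) (Set.mem_image_of_mem _)

end GPrime

/-- Every vertex cover of `G` is a `k`-path vertex cover of the graph `G'` obtained from
`G` by attaching a pendant path on `⌊(k−1)/2⌋` vertices to each vertex. -/
theorem vertexCover_isKPVC_gprime {V : Type*} (G : SimpleGraph V) (k : ℕ) (hk : 2 ≤ k)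
    (I : Set V) (hI : ∀ ⦃u v : V⦄, G.Adj u v → u ∈ I ∨ v ∈ I) :
    IsKPVC (GPrime G ((k - 1) / 2)) k (Sum.inl '' I) := by
  intro a b p hp hlen
  by_cases hG : ∃ d ∈ p.darts, d.fst.isLeft ∧ d.snd.isLeft
  · obtain ⟨d, hd, hleft⟩ := hG
    rcases GPrime.fst_mem_or_snd_mem_of_isLeft hI d hleft with h | h
    · exact ⟨_, p.dart_fst_mem_support_of_mem_darts hd, h⟩
    · exact ⟨_, p.dart_snd_mem_support_of_mem_darts hd, h⟩
  · have hblock := GPrime.proj_eq_of_mem_support p fun d hd hleft => hG ⟨d, hd, hleft⟩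
    have := GPrime.length_le_of_isPath_of_proj_eq hp hblock
    omega
end

section
/- Let G be a graph and G' be obtained from G by attaching to each vertex x of G a pendant path P^x on ⌊(k−1)/2⌋ new vertices. If I' is a minimum k-path vertex cover of G' that contains a vertex y belonging to some attached path P^x, then (I' \ {y}) ∪ {x} is also a minimum k-path vertex cover of G'. -/
/-! A path that avoids `x` but meets `P^x` stays inside `P^x`, which has only
`⌊(k-1)/2⌋ < k` vertices. Hence every path on `k` vertices through `y ∈ P^x` also passes
through `x`, so replacing `y` by `x` in a cover gives a cover that is no larger. -/

theorem List.Nodup.length_le_of_forall_mem_range {α : Type*} {m : ℕ} {l : List α}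
    {f : Fin m → α} (hl : l.Nodup) (h : ∀ a ∈ l, a ∈ Set.range f) : l.length ≤ m := by
  classical
  calc l.length = l.toFinset.card := (List.toFinset_card_of_nodup hl).symm
    _ ≤ (Finset.univ.image f).card :=
      Finset.card_le_card fun a ha => by simpa using h a (List.mem_toFinset.mp ha)
    _ ≤ m := Finset.card_image_le.trans (by simp)

theorem Set.ncard_insert_sdiff_singleton_le {α : Type*} {s : Set α} {b : α} (a : α)
    (hb : b ∈ s) : (insert a (s \ {b})).ncard ≤ s.ncard := by
  obtain hs | hs := s.finite_or_infinite
  · calc (insert a (s \ {b})).ncard ≤ (s \ {b}).ncard + 1 := Set.ncard_insert_le _ _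
      _ = s.ncard := Set.ncard_sdiff_singleton_add_one hb hs
  · rw [((hs.sdiff (Set.finite_singleton b)).mono (Set.subset_insert _ _)).ncard]
    exact Nat.zero_le _

theorem IsKPVC.insert_sdiff_singleton {W : Type*} {G : SimpleGraph W} {k : ℕ} {I : Set W}
    {x y : W} (hI : IsKPVC G k I)
    (hxy : ∀ ⦃u v : W⦄ (p : G.Walk u v), p.IsPath → p.length + 1 = k →
      y ∈ p.support → x ∈ p.support) :
    IsKPVC G k (insert x (I \ {y})) := by
  intro u v p hp hlen
  obtain ⟨z, hz, hzI⟩ := hI p hp hlen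
  by_cases hzy : z = y
  · exact ⟨x, hxy p hp hlen (hzy ▸ hz), Set.mem_insert _ _⟩
  · exact ⟨z, hz, Set.mem_insert_of_mem _ ⟨hzI, hzy⟩⟩

namespace GPrime

variable {V : Type*} {G : SimpleGraph V} {m : ℕ}

def pendantPath (x : V) : Set (V ⊕ V × Fin m) :=
  Set.range fun j => Sum.inr (x, j)

theorem mem_pendantPath_of_adj {x : V} {a b : V ⊕ V × Fin m} (hab : (GPrime G m).Adj a b)
    (ha : a ∈ pendantPath x) (hb : b ≠ Sum.inl x) : b ∈ pendantPath x := by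
  obtain ⟨j, rfl⟩ := ha
  cases b with
  | inl u => exact absurd (congrArg Sum.inl hab.1) hb
  | inr q =>
    obtain ⟨y, i⟩ := q
    obtain rfl : x = y := hab.1
    exact ⟨i, rfl⟩

theorem Walk.support_subset_pendantPath {x : V} {u v : V ⊕ V × Fin m}
    (p : (GPrime G m).Walk u v) (hx : Sum.inl x ∉ p.support)
    (hmeet : ∃ a ∈ p.support, a ∈ pendantPath x) :
    ∀ a ∈ p.support, a ∈ pendantPath x := by
  induction p with
  | nil => simpa using hmeet
  | @cons u w v huw q ih =>
    simp only [SimpleGraph.Walk.support_cons, List.mem_cons, not_or, exists_eq_or_imp,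
      forall_eq_or_imp] at hx hmeet ⊢
    obtain ⟨hxu, hxq⟩ := hx
    have hq : ∀ a ∈ q.support, a ∈ pendantPath x := by
      refine ih hxq ?_
      rcases hmeet with hu | hq
      · exact ⟨w, q.start_mem_support,
          mem_pendantPath_of_adj huw hu fun h => hxq (h ▸ q.start_mem_support)⟩
      · exact hq
    exact ⟨mem_pendantPath_of_adj huw.symm (hq w q.start_mem_support) (Ne.symm hxu), hq⟩

theorem inl_mem_support_of_mem_pendantPath {x : V} {u v y : V ⊕ V × Fin m}
    {p : (GPrime G m).Walk u v} (hp : p.IsPath) (hy : y ∈ pendantPath x)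
    (hyp : y ∈ p.support) (hlen : m < p.length + 1) : Sum.inl x ∈ p.support := by
  by_contra hx
  have hle := hp.support_nodup.length_le_of_forall_mem_range
    (Walk.support_subset_pendantPath p hx ⟨y, hyp, hy⟩)
  rw [SimpleGraph.Walk.length_support] at hle
  omega

end GPrime

theorem min_cover_pendant_swap_general {V : Type*} (G : SimpleGraph V) (k : ℕ)
    (I' : Set (V ⊕ V × Fin ((k - 1) / 2)))
    (hcov : IsKPVC (GPrime G ((k - 1) / 2)) k I')
    (hmin : ∀ J : Set (V ⊕ V × Fin ((k - 1) / 2)),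
      IsKPVC (GPrime G ((k - 1) / 2)) k J → I'.ncard ≤ J.ncard)
    (x : V) (i : Fin ((k - 1) / 2)) (hy : Sum.inr (x, i) ∈ I') :
    IsKPVC (GPrime G ((k - 1) / 2)) k (insert (Sum.inl x) (I' \ {Sum.inr (x, i)})) ∧
    ∀ J : Set (V ⊕ V × Fin ((k - 1) / 2)), IsKPVC (GPrime G ((k - 1) / 2)) k J →
      (insert (Sum.inl x) (I' \ {Sum.inr (x, i)})).ncard ≤ J.ncard := by
  refine ⟨hcov.insert_sdiff_singleton fun u v p hp hlen hyp => ?_,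
    fun J hJ => (Set.ncard_insert_sdiff_singleton_le _ hy).trans (hmin J hJ)⟩
  exact GPrime.inl_mem_support_of_mem_pendantPath hp ⟨i, rfl⟩ hyp (by omega)

/-- If a minimum `k`-path vertex cover `I'` of `G'` contains a vertex `y = (x, i)` of an
attached path `P^x`, then `(I' \ {y}) ∪ {x}` is also a minimum `k`-path vertex cover. -/
theorem min_cover_pendant_swap {V : Type*} [Fintype V] (G : SimpleGraph V) (k : ℕ)
    (hk : 2 ≤ k) (I' : Set (V ⊕ V × Fin ((k - 1) / 2)))
    (hcov : IsKPVC (GPrime G ((k - 1) / 2)) k I')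
    (hmin : ∀ J : Set (V ⊕ V × Fin ((k - 1) / 2)),
      IsKPVC (GPrime G ((k - 1) / 2)) k J → I'.ncard ≤ J.ncard)
    (x : V) (i : Fin ((k - 1) / 2)) (hy : Sum.inr (x, i) ∈ I') :
    IsKPVC (GPrime G ((k - 1) / 2)) k (insert (Sum.inl x) (I' \ {Sum.inr (x, i)})) ∧
    ∀ J : Set (V ⊕ V × Fin ((k - 1) / 2)), IsKPVC (GPrime G ((k - 1) / 2)) k J →
      (insert (Sum.inl x) (I' \ {Sum.inr (x, i)})).ncard ≤ J.ncard :=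
  min_cover_pendant_swap_general G k I' hcov hmin x i hy
end

section
/- Let G be a graph, and let I_i and I_{i+1} be minimum vertex covers of G with I_i \ I_{i+1} = {x} and I_{i+1} \ I_i = {y}. Then x and y are adjacent in G. -/
/-!
If `x` and `y` were not adjacent, then `I ∩ J` would still be a vertex cover: an edge missing
`I ∩ J` must join a vertex of `I \ J = {x}` to a vertex of `J \ I = {y}`. Since `x ∈ I \ I ∩ J`,
this cover is strictly smaller than the minimum cover `I`.
-/

namespace SimpleGraph

variable {V : Type*} {G : SimpleGraph V}

theorem IsVertexCover.inter_of_forall_not_adj {c d : Set V} (hc : G.IsVertexCover c)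
    (hd : G.IsVertexCover d) (h : ∀ a ∈ c \ d, ∀ b ∈ d \ c, ¬ G.Adj a b) :
    G.IsVertexCover (c ∩ d) := by
  intro u v huv
  by_contra! hnot
  rcases hc huv with huc | hvc
  · have hud : u ∉ d := fun hud ↦ hnot.1 ⟨huc, hud⟩
    have hvd : v ∈ d := (hd huv).resolve_left hud
    exact h u ⟨huc, hud⟩ v ⟨hvd, fun hvc ↦ hnot.2 ⟨hvc, hvd⟩⟩ huv
  · have hvd : v ∉ d := fun hvd ↦ hnot.2 ⟨hvc, hvd⟩
    have hud : u ∈ d := (hd huv).resolve_right hvd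
    exact h v ⟨hvc, hvd⟩ u ⟨hud, fun huc ↦ hnot.1 ⟨huc, hud⟩⟩ huv.symm

end SimpleGraph

theorem min_vc_jump_is_slide_general {V : Type*} [DecidableEq V]
    (G : SimpleGraph V) (I J : Finset V) (x y : V)
    (hIvc : ∀ ⦃u v : V⦄, G.Adj u v → u ∈ I ∨ v ∈ I)
    (hImin : ∀ K : Finset V, (∀ ⦃u v : V⦄, G.Adj u v → u ∈ K ∨ v ∈ K) → I.card ≤ K.card)
    (hJvc : ∀ ⦃u v : V⦄, G.Adj u v → u ∈ J ∨ v ∈ J)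
    (h1 : I \ J = {x}) (h2 : J \ I = {y}) :
    G.Adj x y := by
  by_contra hxy
  have hcover : G.IsVertexCover ↑(I ∩ J) := by
    rw [Finset.coe_inter]
    refine SimpleGraph.IsVertexCover.inter_of_forall_not_adj hIvc hJvc fun a ha b hb ↦ ?_
    rw [← Finset.coe_sdiff, h1, Finset.coe_singleton, Set.mem_singleton_iff] at ha
    rw [← Finset.coe_sdiff, h2, Finset.coe_singleton, Set.mem_singleton_iff] at hb
    exact ha ▸ hb ▸ hxy
  obtain ⟨hxI, hxJ⟩ := Finset.mem_sdiff.mp (h1 ▸ Finset.mem_singleton_self x)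
  have hlt : (I ∩ J).card < I.card := Finset.card_lt_card <|
    (Finset.ssubset_iff_of_subset Finset.inter_subset_left).mpr
      ⟨x, hxI, fun hx ↦ hxJ (Finset.mem_inter.mp hx).2⟩
  exact (hImin _ hcover).not_gt hlt

/-- If two minimum vertex covers `I` and `J` of `G` satisfy `I \ J = {x}` and
`J \ I = {y}`, then `x` and `y` are adjacent in `G`. -/
theorem min_vc_jump_is_slide {V : Type*} [Fintype V] [DecidableEq V]
    (G : SimpleGraph V) (I J : Finset V) (x y : V)
    (hIvc : ∀ ⦃u v : V⦄, G.Adj u v → u ∈ I ∨ v ∈ I)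
    (hImin : ∀ K : Finset V, (∀ ⦃u v : V⦄, G.Adj u v → u ∈ K ∨ v ∈ K) → I.card ≤ K.card)
    (hJvc : ∀ ⦃u v : V⦄, G.Adj u v → u ∈ J ∨ v ∈ J)
    (hJmin : ∀ K : Finset V, (∀ ⦃u v : V⦄, G.Adj u v → u ∈ K ∨ v ∈ K) → J.card ≤ K.card)
    (h1 : I \ J = {x}) (h2 : J \ I = {y}) :
    G.Adj x y :=
  min_vc_jump_is_slide_general G I J x y hIvc hImin hJvc h1 h2
end
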